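/- Supportedness for aggregate programs: under the same setting as the previous statement (rules with one head atom, finite positive bodies, cardinality aggregate conditions; A an answer set, i.e., the least model of the aggregate reduct of Π w.r.t. A), for every atom a ∈ A there exists a rule r ∈ Π with head a such that all positive body atoms of r are in A and all aggregate conditions of r hold in A. -/

import Mathlib

/-- Models and least models of ground definite programs. -/
def IsModel {α : Type*} (P : Set (α × Set α)) (A : Set α) : Prop :=
  ∀ r ∈ P, r.2 ⊆ A → r.1 ∈ A

def IsLeastModel {α : Type*} (P : Set (α × Set α)) (A : Set α) : Prop :=
  IsModel P A ∧ ∀ M : Set α, IsModel P M → A ⊆ M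

/-- The six arithmetic relations. -/
inductive AggRel | eq | lt | gt | le | ge | ne

def AggRel.eval : AggRel → ℕ → ℕ → Prop
  | .eq, a, b => a = b
  | .lt, a, b => a < b
  | .gt, a, b => a > b
  | .le, a, b => a ≤ b
  | .ge, a, b => a ≥ b
  | .ne, a, b => a ≠ b

/-- An aggregate condition `|{t : p(t) ∈ S}| ⊙ n`. -/
structure AggCond (τ α : Type*) where
  pred : τ → α
  rel : AggRel
  n : ℕ

def AggCond.holds {τ α : Type*} (c : AggCond τ α) (S : Set α) : Prop :=
  c.rel.eval (Set.ncard {t : τ | c.pred t ∈ S}) c.n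

/-- A rule: one head atom, a finite set of positive body atoms and a finite set of
aggregate conditions. -/
structure ARule (τ α : Type*) where
  head : α
  body : Finset α
  aggs : List (AggCond τ α)

/-- Aggregate reduct w.r.t. A: delete rules with a failing aggregate condition;
replace the conditions of surviving rules by the atoms {p(t) : p(t) ∈ A}. -/
def reduct {τ α : Type*} (P : Set (ARule τ α)) (A : Set α) : Set (α × Set α) :=
  {r | ∃ q ∈ P, (∀ c ∈ q.aggs, c.holds A) ∧
    r = (q.head, ↑q.body ∪ {a : α | ∃ c ∈ q.aggs, ∃ t : τ, c.pred t ∈ A ∧ a = c.pred t})}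

def AnswerSet {τ α : Type*} (P : Set (ARule τ α)) (A : Set α) : Prop :=
  IsLeastModel (reduct P A) A

/-- Otherwise `A \ {a}` would already be a model, contradicting minimality. -/
theorem IsLeastModel.exists_rule_of_mem {α : Type*} {P : Set (α × Set α)} {A : Set α}
    (h : IsLeastModel P A) {a : α} (ha : a ∈ A) : ∃ r ∈ P, r.1 = a ∧ r.2 ⊆ A := by
  by_contra! hunsupported
  have hmodel : IsModel P (A \ {a}) := fun r hr hbody =>
    have hbodyA : r.2 ⊆ A := hbody.trans Set.sdiff_subset
    ⟨h.1 r hr hbodyA, fun hhead => hunsupported r hr hhead hbodyA⟩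
  exact (h.2 _ hmodel ha).2 rfl

/-- Supportedness for aggregate programs: every atom of an answer set is supported
by a rule whose positive body is in A and whose aggregate conditions hold in A. -/
theorem answer_set_supported {τ α : Type*} (P : Set (ARule τ α)) (A : Set α)
    (h : AnswerSet P A) :
    ∀ a ∈ A, ∃ r ∈ P, r.head = a ∧ ↑r.body ⊆ A ∧ ∀ c ∈ r.aggs, c.holds A := by
  intro a ha
  obtain ⟨_, ⟨q, hqP, hagg, rfl⟩, rfl, hbody⟩ := h.exists_rule_of_mem ha
  exact ⟨q, hqP, rfl, Set.subset_union_left.trans hbody, hagg⟩
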